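/- For every i ∈ ℤ, the following two functions on X_i coincide: x ↦ r_X(class of x·(1 ⊗ π^{−i}) in X_0/X_1) and x ↦ p_{d+i}(φ(x)). (Here x·(1 ⊗ π^{−i}) ∈ X_0, and p_{d+i}(φ(x)) is defined since φ(X_i) = C_{d+i}.) -/

import Mathlib

set_option synthInstance.maxHeartbeats 1000000
set_option maxHeartbeats 1000000

open scoped TensorProduct

noncomputable section

/-- A normalized additive discrete valuation turning `K` into a complete discrete
valuation field (the value at `0` is junk). -/
structure CDVF (K : Type) [Field K] where
  v : K → ℤ
  v_mul : ∀ {x y : K}, x ≠ 0 → y ≠ 0 → v (x * y) = v x + v y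
  v_add : ∀ {x y : K}, x ≠ 0 → y ≠ 0 → x + y ≠ 0 → min (v x) (v y) ≤ v (x + y)
  v_one : v 1 = 0
  exists_uniformizer : ∃ x : K, x ≠ 0 ∧ v x = 1
  complete : ∀ f : ℕ → K,
    (∀ N : ℤ, ∃ M : ℕ, ∀ i ≥ M, ∀ j ≥ M, f i = f j ∨ N ≤ v (f i - f j)) →
    ∃ x : K, ∀ N : ℤ, ∃ M : ℕ, ∀ i ≥ M, f i = x ∨ N ≤ v (f i - x)

namespace CDVF

variable {K : Type} [Field K] (S : CDVF K)

/-- The ring of integers of a complete discrete valuation field. -/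
def O : Subring K where
  carrier := {x : K | x = 0 ∨ 0 ≤ S.v x}
  zero_mem' := Or.inl rfl
  one_mem' := Or.inr S.v_one.ge
  mul_mem' := by
    rintro x y hx hy
    rcases eq_or_ne x 0 with rfl | hx0
    · exact Or.inl (zero_mul _)
    rcases eq_or_ne y 0 with rfl | hy0
    · exact Or.inl (mul_zero _)
    · refine Or.inr ?_
      rw [S.v_mul hx0 hy0]
      have h1 := hx.resolve_left hx0
      have h2 := hy.resolve_left hy0
      omega
  add_mem' := by
    rintro x y hx hy
    rcases eq_or_ne x 0 with rfl | hx0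
    · simpa using hy
    rcases eq_or_ne y 0 with rfl | hy0
    · simpa using hx
    rcases eq_or_ne (x + y) 0 with h | h
    · exact Or.inl h
    · refine Or.inr ?_
      have h3 := S.v_add hx0 hy0 h
      have h1 := hx.resolve_left hx0
      have h2 := hy.resolve_left hy0
      omega
  neg_mem' := by
    rintro x hx
    rcases eq_or_ne x 0 with rfl | hx0
    · simp
    · refine Or.inr ?_
      have hn : S.v (-x) = S.v x := by
        have h1 : (-1 : K) ≠ 0 := by simp
        have e : (-1 : K) * (-1) = 1 := by ring
        have h2 := S.v_mul (x := (-1 : K)) (y := (-1 : K)) h1 h1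
        rw [e, S.v_one] at h2
        have h3 := S.v_mul (x := (-1 : K)) (y := x) h1 hx0
        rw [neg_one_mul] at h3
        omega
      rw [hn]
      exact hx.resolve_left hx0

/-- The maximal ideal of the ring of integers. -/
def mIdeal : Ideal S.O where
  carrier := {x : S.O | (x : K) = 0 ∨ 1 ≤ S.v (x : K)}
  zero_mem' := Or.inl rfl
  add_mem' := by
    rintro x y hx hy
    rcases eq_or_ne ((x : K)) 0 with h1 | h1
    · have : ((x + y : S.O) : K) = (y : K) := by push_cast [h1]; ring
      rw [Set.mem_setOf_eq, this]; exact hy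
    rcases eq_or_ne ((y : K)) 0 with h2 | h2
    · have : ((x + y : S.O) : K) = (x : K) := by push_cast [h2]; ring
      rw [Set.mem_setOf_eq, this]; exact hx
    rcases eq_or_ne ((x : K) + (y : K)) 0 with h | h
    · exact Or.inl (by push_cast; exact h)
    · refine Or.inr ?_
      have h3 := S.v_add h1 h2 h
      have hx' := hx.resolve_left h1
      have hy' := hy.resolve_left h2
      have : ((x + y : S.O) : K) = (x : K) + (y : K) := by push_cast; ring
      rw [this]
      omega
  smul_mem' := by
    rintro c x hx
    rcases eq_or_ne ((c : K)) 0 with h1 | h1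
    · exact Or.inl (by push_cast [smul_eq_mul, h1]; ring)
    rcases eq_or_ne ((x : K)) 0 with h2 | h2
    · exact Or.inl (by push_cast [smul_eq_mul, h2]; ring)
    · refine Or.inr ?_
      have hc : (c : K) = 0 ∨ 0 ≤ S.v (c : K) := c.2
      have hc' := hc.resolve_left h1
      have hx' := hx.resolve_left h2
      have : ((c • x : S.O) : K) = (c : K) * (x : K) := by push_cast [smul_eq_mul]; ring
      rw [this, S.v_mul h1 h2]
      omega

/-- The residue field (as a quotient ring). -/
abbrev Residue : Type := S.O ⧸ S.mIdeal

instance instIsTwoSidedRring (n : ℕ) :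
    (Ideal.span {(Polynomial.X : Polynomial S.Residue) ^ n - 1}).IsTwoSided :=
  ⟨fun b ha ↦ mul_comm b _ ▸ Ideal.mul_mem_left _ b ha⟩

open Classical in
/-- Reduction map `O_K → k̄`, extended by (junk) zero outside of `O_K`. -/
def redK (x : K) : S.Residue :=
  if h : x ∈ S.O then Ideal.Quotient.mk S.mIdeal ⟨x, h⟩ else 0

/-- The ring `R = k̄[X]/(X^n - 1)`. -/
abbrev Rring (n : ℕ) : Type :=
  Polynomial S.Residue ⧸ Ideal.span {(Polynomial.X : Polynomial S.Residue) ^ n - 1}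

/-- The class of the variable `X` in `R`. -/
def mkX (n : ℕ) : S.Rring n :=
  Ideal.Quotient.mk _ Polynomial.X

instance instAlgebraResidueRring (n : ℕ) : Algebra S.Residue (S.Rring n) :=
  Ideal.Quotient.algebra _

instance instModuleResidueRring (n : ℕ) : Module S.Residue (S.Rring n) :=
  Algebra.toModule

end CDVF

/-- A totally ramified extension `K/k` of complete discrete valuation fields,
where `v` is the normalized valuation of `K`. -/
structure TotallyRamified (k K : Type) [Field k] [Field K] [Algebra k K]
    extends CDVF K where
  finiteDim : FiniteDimensional k K
  val_dvd : ∀ x : k, x ≠ 0 →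
    (Module.finrank k K : ℤ) ∣ toCDVF.v (algebraMap k K x)
  exists_base_uniformizer : ∃ x : k, x ≠ 0 ∧
    toCDVF.v (algebraMap k K x) = (Module.finrank k K : ℤ)
  residue_trivial : ∀ x : K, (x = 0 ∨ 0 ≤ toCDVF.v x) →
    ∃ y : k, x - algebraMap k K y = 0 ∨ 1 ≤ toCDVF.v (x - algebraMap k K y)

/-- A totally ramified extension together with its ramification depth `d`;
`d` is characterized by the property that the codifferent of `K/k`
(the trace-dual of `O_K`) equals `𝔪^(1-d-n)`, i.e. `d = v(different) - n + 1`. -/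
structure TotallyRamifiedD (k K : Type) [Field k] [Field K] [Algebra k K]
    extends TotallyRamified k K where
  depth : ℤ
  depth_spec : ∀ x : K,
    (∀ y : K, (y = 0 ∨ 0 ≤ toCDVF.v y) →
      (Algebra.trace k K (x * y) = 0 ∨
        0 ≤ toCDVF.v (algebraMap k K (Algebra.trace k K (x * y))))) ↔
    (x = 0 ∨ 1 - depth - (Module.finrank k K : ℤ) ≤ toCDVF.v x)

section GaloisModules

variable (k : Type) {K : Type} [Field k] [Field K] [Algebra k K]

/-- The action of the group algebra `K[G]` on `K`: `(Σ a_σ σ)(x) = Σ a_σ σ(x)`. -/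
def applyGA (f : MonoidAlgebra K (K ≃ₐ[k] K)) (x : K) : K :=
  f.coeff.sum fun σ a => a * σ x

/-- The filtration module `C_i ⊆ K[G]`. -/
def CfilGA (S : CDVF K) (i : ℤ) : Set (MonoidAlgebra K (K ≃ₐ[k] K)) :=
  {f | ∀ x : K, x ≠ 0 → applyGA k f x = 0 ∨ S.v x + i ≤ S.v (applyGA k f x)}

/-- `f ∈ K[G]` has all its coefficients in (the image of) `k₀`. -/
def coeffsIn (k₀ : Type) [CommRing k₀] [Algebra k₀ K]
    (f : MonoidAlgebra K (K ≃ₐ[k] K)) : Prop :=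
  ∀ σ : K ≃ₐ[k] K, ∃ c : k₀, f.coeff σ = algebraMap k₀ K c

/-- The `k₀`-submodule `k₀[G] ⊆ K[G]`. -/
def baseSub (k₀ : Type) [Field k₀] [Algebra k₀ K] :
    Submodule k₀ (MonoidAlgebra K (K ≃ₐ[k] K)) where
  carrier := {f | coeffsIn k k₀ f}
  zero_mem' := by intro σ; exact ⟨0, by simp⟩
  add_mem' := by
    intro f g hf hg σ
    obtain ⟨c, hc⟩ := hf σ
    obtain ⟨d, hd⟩ := hg σ
    refine ⟨c + d, ?_⟩
    rw [map_add, ← hc, ← hd]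
    exact Finsupp.add_apply f.coeff g.coeff σ
  smul_mem' := by
    intro a f hf σ
    obtain ⟨c, hc⟩ := hf σ
    refine ⟨a * c, ?_⟩
    rw [MonoidAlgebra.coeff_smul_apply, hc, map_mul, Algebra.smul_def]

/-- `d(f)`: the unique integer `i` with `f ∈ C_{i+d} ∖ C_{i+d+1}` (junk value if
no such integer exists). -/
def dOfGA (S : TotallyRamifiedD k K) (f : MonoidAlgebra K (K ≃ₐ[k] K)) : ℤ :=
  Classical.epsilon fun i : ℤ =>
    f ∈ CfilGA k S.toCDVF (i + S.depth) ∧ f ∉ CfilGA k S.toCDVF (i + S.depth + 1)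

/-- The map `p_i : C_i → R = k̄[X]/(X^n-1)`,
`p_i(f) = r(c_π)⁻¹ Σ_j r(f(π^{j-i})/π^j) X^j` (junk outside `C_i`). -/
def pGA (S : TotallyRamifiedD k K) (π : K) (i : ℤ)
    (f : MonoidAlgebra K (K ≃ₐ[k] K)) :
    S.toCDVF.Rring (Module.finrank k K) :=
  Ring.inverse
      (algebraMap S.toCDVF.Residue _
        (S.toCDVF.redK (algebraMap k K (Algebra.trace k K (π ^ (-S.depth))))))
    * ∑ j ∈ Finset.range (Module.finrank k K),
        algebraMap S.toCDVF.Residue _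
            (S.toCDVF.redK (applyGA k f (π ^ ((j : ℤ) - i)) / π ^ j))
          * (S.toCDVF.mkX (Module.finrank k K)) ^ j

/-- `ρ(f) = p_{d(f)+d}(f)`. -/
def rhoGA (S : TotallyRamifiedD k K) (π : K) (f : MonoidAlgebra K (K ≃ₐ[k] K)) :
    S.toCDVF.Rring (Module.finrank k K) :=
  pGA k S π (dOfGA k S f + S.depth) f

/-- `B_s = {f ∈ B : d(f) ≡ s mod e₀}`. -/
def BpartGA (S : TotallyRamifiedD k K) (e₀ : ℤ)
    (B : Set (MonoidAlgebra K (K ≃ₐ[k] K))) (s : ℤ) :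
    Set (MonoidAlgebra K (K ≃ₐ[k] K)) :=
  {f | f ∈ B ∧ Int.ModEq e₀ (dOfGA k S f) s}

/-- `B` is graded-independent (relative to the modulus `e₀`): for every `s`
the set `ρ(B_s) ⊆ R` is linearly independent over the residue field. -/
def GradedIndepGA (S : TotallyRamifiedD k K) (π : K) (e₀ : ℤ)
    (B : Set (MonoidAlgebra K (K ≃ₐ[k] K))) : Prop :=
  ∀ s : ℤ, LinearIndependent S.toCDVF.Residue
    (fun g : (rhoGA k S π '' BpartGA k S e₀ B s) =>
      (g : S.toCDVF.Rring (Module.finrank k K)))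

/-- The (lower) ramification jump of `σ ∈ G`: `h(σ) = v(σ(π) - π) - 1`. -/
def rjump (S : CDVF K) (π : K) (σ : K ≃ₐ[k] K) : ℤ :=
  S.v (σ π - π) - 1

/-- The ramification depth of a subextension `L/k` of `K/k`, where `e` is the
ramification index of `K/L`: `D` is the depth of `L/k` iff the trace-dual of
`O_L` equals `𝔪_L^(1-D-[L:k])`. -/
def IsSubDepth (S : CDVF K) (L : IntermediateField k K) (e D : ℤ) : Prop :=
  ∀ x : ↥L,
    (∀ y : ↥L, ((y : K) = 0 ∨ 0 ≤ S.v (y : K)) →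
      (Algebra.trace k ↥L (x * y) = 0 ∨
        0 ≤ S.v (algebraMap k K (Algebra.trace k ↥L (x * y))))) ↔
    ((x : K) = 0 ∨ e * (1 - D - (Module.finrank k ↥L : ℤ)) ≤ S.v (x : K))

end GaloisModules

section Phi

variable (k K : Type) [Field k] [Field K] [Algebra k K]

/-- The isomorphism `φ : K ⊗_k K → K[G]`, `x ⊗ y ↦ x Σ_σ σ(y) σ`. -/
def phiGA [FiniteDimensional k K] :
    K ⊗[k] K →ₗ[k] MonoidAlgebra K (K ≃ₐ[k] K) :=
  TensorProduct.lift
    { toFun := fun x =>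
        { toFun := fun y => ∑ σ : K ≃ₐ[k] K, MonoidAlgebra.single σ (x * σ y)
          map_add' := fun y z => by
            rw [← Finset.sum_add_distrib]
            refine Finset.sum_congr rfl fun σ _ => ?_
            rw [map_add, mul_add, MonoidAlgebra.single_add]
          map_smul' := fun a y => by
            rw [RingHom.id_apply, Finset.smul_sum]
            refine Finset.sum_congr rfl fun σ _ => ?_
            rw [map_smul, MonoidAlgebra.smul_single]
            congr 1
            rw [Algebra.smul_def, Algebra.smul_def]
            ring }
      map_add' := fun x x' => LinearMap.ext fun y => by
        show (∑ σ : K ≃ₐ[k] K, MonoidAlgebra.single σ ((x + x') * σ y)) =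
          (∑ σ : K ≃ₐ[k] K, MonoidAlgebra.single σ (x * σ y)) +
            ∑ σ : K ≃ₐ[k] K, MonoidAlgebra.single σ (x' * σ y)
        rw [← Finset.sum_add_distrib]
        refine Finset.sum_congr rfl fun σ _ => ?_
        rw [add_mul, MonoidAlgebra.single_add]
      map_smul' := fun a x => LinearMap.ext fun y => by
        show (∑ σ : K ≃ₐ[k] K, MonoidAlgebra.single σ ((a • x) * σ y)) =
          a • ∑ σ : K ≃ₐ[k] K, MonoidAlgebra.single σ (x * σ y)
        rw [Finset.smul_sum]
        refine Finset.sum_congr rfl fun σ _ => ?_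
        rw [MonoidAlgebra.smul_single]
        congr 1
        rw [Algebra.smul_def, Algebra.smul_def]
        ring }

/-- Coefficientwise (Hadamard) product on `K[G]`. -/
def hadamardGA (f g : MonoidAlgebra K (K ≃ₐ[k] K)) :
    MonoidAlgebra K (K ≃ₐ[k] K) :=
  MonoidAlgebra.ofCoeff (Finsupp.zipWith (· * ·) (mul_zero 0) f.coeff g.coeff)

/-- The filtration `X_i = Σ_j 𝔪^j ⊗_{O_k} 𝔪^{i-j} ⊆ K ⊗_k K`. -/
def Xfil (S : CDVF K) (i : ℤ) : AddSubgroup (K ⊗[k] K) :=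
  AddSubgroup.closure
    {z | ∃ (x y : K) (j : ℤ), (x = 0 ∨ j ≤ S.v x) ∧ (y = 0 ∨ i - j ≤ S.v y) ∧
      z = x ⊗ₜ[k] y}

/-- The subring `O_K ⊗_{O_k} O_K ⊆ K ⊗_k K` (more precisely, its image). -/
def OOsub (S : CDVF K) : Subring (K ⊗[k] K) :=
  Subring.closure
    {z | ∃ x y : K, (x = 0 ∨ 0 ≤ S.v x) ∧ (y = 0 ∨ 0 ≤ S.v y) ∧ z = x ⊗ₜ[k] y}

/-- The partial (pre)order on `ℤ²` induced by the componentwise order on the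
quotient `𝒳 = ℤ²/∼`, where `(a,b) ∼ (a-nc, b+nc)`. -/
def classLE (n : ℤ) (q q' : ℤ × ℤ) : Prop :=
  ∃ c : ℤ, q.1 ≤ q'.1 + n * c ∧ q.2 ≤ q'.2 - n * c

/-- `α ∈ K ⊗_k K` is diagonal: it can be written as `Σ ε_{ij} π^i ⊗ π^j` with
`ε_{ij}` units of `O_K ⊗_{O_k} O_K`, the classes of the pairs `(i,j)` pairwise
incomparable, and `i + j` constant. -/
def DiagonalT (S : CDVF K) (π : K) (n : ℤ) (α : K ⊗[k] K) : Prop :=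
  ∃ (T : Finset (ℤ × ℤ)) (ε : ℤ × ℤ → K ⊗[k] K) (c : ℤ),
    (∀ q ∈ T, ε q ∈ OOsub k K S ∧ ∃ β ∈ OOsub k K S, ε q * β = 1) ∧
    (∀ q ∈ T, ∀ q' ∈ T, q ≠ q' → ¬classLE n q q' ∧ ¬classLE n q' q) ∧
    (∀ q ∈ T, q.1 + q.2 = c) ∧
    α = ∑ q ∈ T, (ε q) * ((π ^ q.1) ⊗ₜ[k] (π ^ q.2))

/-- The defining properties of the canonical map `r_X : X_0/X_1 → k̄[X]/(X^n-1)`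
(viewed as a function on `X_0 ⊆ K ⊗_k K`): it is additive and multiplicative on
`X_0`, unital, kills `X_1`, sends `π ⊗ π⁻¹` to `X` and is `k̄`-linear. -/
def IsRX (S : CDVF K) (n : ℕ) (π : K) (ψ : K ⊗[k] K → S.Rring n) : Prop :=
  (∀ x y : K ⊗[k] K, x ∈ Xfil k K S 0 → y ∈ Xfil k K S 0 →
    ψ (x + y) = ψ x + ψ y) ∧
  (∀ x y : K ⊗[k] K, x ∈ Xfil k K S 0 → y ∈ Xfil k K S 0 →
    ψ (x * y) = ψ x * ψ y) ∧
  ψ 1 = 1 ∧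
  (∀ x ∈ Xfil k K S 1, ψ x = 0) ∧
  ψ (π ⊗ₜ[k] π⁻¹) = S.mkX n ∧
  (∀ c : k, (c = 0 ∨ 0 ≤ S.v (algebraMap k K c)) →
    ψ (algebraMap k K c ⊗ₜ[k] (1 : K)) =
      algebraMap S.Residue (S.Rring n) (S.redK (algebraMap k K c)))

end Phi

section TensorMapSec

variable (k' k K' K : Type) [Field k'] [Field k] [Field K'] [Field K]
  [Algebra k' k] [Algebra k' K'] [Algebra k K] [Algebra K' K] [Algebra k' K]
  [IsScalarTower k' k K] [IsScalarTower k' K' K]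

/-- The natural map `K' ⊗_{k'} K' → K ⊗_k K`, `x ⊗ y ↦ x ⊗ y`. -/
def tensorMap : K' ⊗[k'] K' →+ K ⊗[k] K :=
  TensorProduct.liftAddHom
    { toFun := fun x =>
        { toFun := fun y => algebraMap K' K x ⊗ₜ[k] algebraMap K' K y
          map_zero' := by simp
          map_add' := by intro y z; simp [map_add, TensorProduct.tmul_add] }
      map_zero' := by
        ext y; simp
      map_add' := by
        intro x z; ext y; simp [map_add, TensorProduct.add_tmul] }
    (by
      intro r m n
      have h : ∀ u : K', algebraMap K' K (r • u) =
          (algebraMap k' k r) • (algebraMap K' K u) := by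
        intro u
        rw [Algebra.smul_def, map_mul, Algebra.smul_def]
        congr 1
        rw [← IsScalarTower.algebraMap_apply k' K' K,
          IsScalarTower.algebraMap_apply k' k K]
      simp only [AddMonoidHom.coe_mk, ZeroHom.coe_mk]
      rw [h, h, TensorProduct.smul_tmul])

end TensorMapSec

section LiftGA

variable {k' K' k K : Type} [Field k'] [Field K'] [Field k] [Field K]
  [Algebra k' K'] [Algebra k K] [Algebra K' K]

/-- Transport of a group-algebra element along a lifting `ι` of Galois
automorphisms and the inclusion of coefficients. -/
def liftGA (ι : (K' ≃ₐ[k'] K') → (K ≃ₐ[k] K))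
    (f : MonoidAlgebra K' (K' ≃ₐ[k'] K')) : MonoidAlgebra K (K ≃ₐ[k] K) :=
  f.coeff.sum fun σ a => MonoidAlgebra.single (ι σ) (algebraMap K' K a)

end LiftGA

/-- The setting of an elementary abelian extension of degree `p²`:
`K = K₁K₂` with `K₁/k`, `K₂/k` of degree `p` with ramification jumps
`h₂ > h₁ > 0`; `σ₁` (resp. `σ₂`) is a nontrivial element of `G` acting
trivially on `K₂` (resp. `K₁`), and `π` is a uniformizer of `K`. -/
structure ZpSetting (p : ℕ) (k K : Type) [Field k] [Field K] [Algebra k K]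
    extends TotallyRamifiedD k K where
  π : K
  K₁ : IntermediateField k K
  K₂ : IntermediateField k K
  σ₁ : K ≃ₐ[k] K
  σ₂ : K ≃ₐ[k] K
  h₁ : ℤ
  h₂ : ℤ
  pp : p.Prime
  galois : IsGalois k K
  rank : Module.finrank k K = p ^ 2
  expP : ∀ σ : K ≃ₐ[k] K, σ ^ p = 1
  rank₁ : Module.finrank k ↥K₁ = p
  rank₂ : Module.finrank k ↥K₂ = p
  normal₁ : Normal k ↥K₁
  normal₂ : Normal k ↥K₂
  compositum : K₁ ⊔ K₂ = ⊤
  σ₁_ne : σ₁ ≠ 1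
  σ₂_ne : σ₂ ≠ 1
  σ₁_fix : ∀ x : K, x ∈ K₂ → σ₁ x = x
  σ₂_fix : ∀ x : K, x ∈ K₁ → σ₂ x = x
  h₁_pos : 0 < h₁
  h_lt : h₁ < h₂
  π_ne : π ≠ 0
  π_uni : toCDVF.v π = 1
  exists_uni₁ : ∃ x : K, x ∈ K₁ ∧ x ≠ 0 ∧ toCDVF.v x = (p : ℤ)
  exists_uni₂ : ∃ x : K, x ∈ K₂ ∧ x ≠ 0 ∧ toCDVF.v x = (p : ℤ)
  jump₁ : ∀ x : K, x ∈ K₁ → x ≠ 0 → toCDVF.v x = (p : ℤ) →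
    toCDVF.v (σ₁ x - x) = (p : ℤ) * (h₁ + 1)
  jump₂ : ∀ x : K, x ∈ K₂ → x ≠ 0 → toCDVF.v x = (p : ℤ) →
    toCDVF.v (σ₂ x - x) = (p : ℤ) * (h₂ + 1)

/-- The element `f_{ij} = (σ₁ - 1)^i (σ₂ - 1)^j ∈ k[G] ⊆ K[G]`. -/
def fijGA {p : ℕ} {k K : Type} [Field k] [Field K] [Algebra k K]
    (Z : ZpSetting p k K) (i j : ℕ) : MonoidAlgebra K (K ≃ₐ[k] K) :=
  (MonoidAlgebra.single Z.σ₁ (1 : K) - 1) ^ i *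
    (MonoidAlgebra.single Z.σ₂ (1 : K) - 1) ^ j

/-- The piecewise linear function `H(i,j)`. -/
def Hfun (p : ℕ) (h₁ h₂ d : ℤ) (i j : ℕ) : ℤ :=
  if (i : ℤ) + (j : ℤ) < (p : ℤ) - 1 then
    h₁ * i + ((p : ℤ) * h₂ - ((p : ℤ) - 1) * h₁) * j - d
  else ((p : ℤ) * i - ((p : ℤ) - 1) ^ 2) * h₁ + (p : ℤ) * h₂ * j

/-- The element `P(i,j) ∈ R = k̄[X]/(X^n - 1)`. -/
def Pel {K : Type} [Field K] (S : CDVF K) (n p : ℕ) (h₁ h₂ : ℤ) (i j : ℕ) :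
    S.Rring n :=
  if (i : ℤ) + (j : ℤ) < (p : ℤ) - 1 then
    ((S.mkX n) ^ h₁.toNat - 1) ^ (n - (i + j) - 1)
  else
    (∑ s ∈ Finset.range p,
        ((∏ l ∈ Finset.range i, ((s : ℤ) - ((l : ℤ) + 1) * h₁) : ℤ) : S.Rring n)
          * (S.mkX n) ^ (p * s)) *
    (∑ t ∈ Finset.range p,
        ((∏ l ∈ Finset.range j, ((t : ℤ) - ((l : ℤ) + 1) * h₂) : ℤ) : S.Rring n)
          * (S.mkX n) ^ (p * t))

end

noncomputable section Statement10Aux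

namespace CDVF

variable {K : Type} [Field K] (S : CDVF K)

instance instCommRingRringAux (n : ℕ) : CommRing (S.Rring n) :=
  { (inferInstance : Ring (S.Rring n)) with
    mul_comm := fun a b => by
      obtain ⟨a, rfl⟩ := Ideal.Quotient.mk_surjective a
      obtain ⟨b, rfl⟩ := Ideal.Quotient.mk_surjective b
      rw [← map_mul, ← map_mul]
      exact congrArg _ (mul_comm a b) }

/-- `x = 0` or `t ≤ v x`. -/
def Pval (t : ℤ) (x : K) : Prop := x = 0 ∨ t ≤ S.v x

lemma v_neg {x : K} (hx : x ≠ 0) : S.v (-x) = S.v x := by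
  have h1 : (-1 : K) ≠ 0 := by simp
  have e : (-1 : K) * (-1) = 1 := by ring
  have h2 := S.v_mul (x := (-1 : K)) (y := (-1 : K)) h1 h1
  rw [e, S.v_one] at h2
  have h3 := S.v_mul (x := (-1 : K)) (y := x) h1 hx
  rw [neg_one_mul] at h3
  omega

lemma v_inv {x : K} (hx : x ≠ 0) : S.v x⁻¹ = -S.v x := by
  have h1 : x⁻¹ ≠ 0 := inv_ne_zero hx
  have h2 := S.v_mul hx h1
  rw [mul_inv_cancel₀ hx, S.v_one] at h2
  omega

lemma v_zpow {x : K} (hx : x ≠ 0) (m : ℤ) : S.v (x ^ m) = m * S.v x := by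
  induction m using Int.induction_on with
  | zero => simpa using S.v_one
  | succ j ih =>
      rw [zpow_add_one₀ hx, S.v_mul (zpow_ne_zero _ hx) hx, ih]; ring
  | pred j ih =>
      rw [zpow_sub_one₀ hx, S.v_mul (zpow_ne_zero _ hx) (inv_ne_zero hx), ih,
        S.v_inv hx]; ring

lemma v_pow {x : K} (hx : x ≠ 0) (m : ℕ) : S.v (x ^ m) = m * S.v x := by
  have := S.v_zpow hx (m : ℤ)
  rwa [zpow_natCast] at this

variable {S}

lemma Pval.mono {t t' : ℤ} (h : t' ≤ t) {x : K} (hx : S.Pval t x) : S.Pval t' x :=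
  hx.imp id fun h' => le_trans h h'

lemma Pval.add {t : ℤ} {x y : K} (hx : S.Pval t x) (hy : S.Pval t y) :
    S.Pval t (x + y) := by
  rcases eq_or_ne x 0 with rfl | hx0
  · simpa using hy
  rcases eq_or_ne y 0 with rfl | hy0
  · simpa using hx
  rcases eq_or_ne (x + y) 0 with h | h
  · exact Or.inl h
  rcases hx with rfl | hx
  · exact absurd rfl hx0
  rcases hy with rfl | hy
  · exact absurd rfl hy0
  exact Or.inr (le_trans (le_min hx hy) (S.v_add hx0 hy0 h))

lemma Pval.neg {t : ℤ} {x : K} (hx : S.Pval t x) : S.Pval t (-x) := by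
  rcases hx with rfl | hx
  · simp [Pval]
  rcases eq_or_ne x 0 with rfl | hx0
  · simp [Pval]
  · exact Or.inr (by rwa [S.v_neg hx0])

lemma Pval.mul {t s : ℤ} {x y : K} (hx : S.Pval t x) (hy : S.Pval s y) :
    S.Pval (t + s) (x * y) := by
  rcases hx with rfl | hx
  · exact Or.inl (zero_mul _)
  rcases hy with rfl | hy
  · exact Or.inl (mul_zero _)
  rcases eq_or_ne x 0 with rfl | hx0
  · exact Or.inl (zero_mul _)
  rcases eq_or_ne y 0 with rfl | hy0
  · exact Or.inl (mul_zero _)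
  · exact Or.inr (by rw [S.v_mul hx0 hy0]; omega)

lemma Pval.sum {t : ℤ} {ι : Type*} {s : Finset ι} {f : ι → K}
    (h : ∀ i ∈ s, S.Pval t (f i)) : S.Pval t (∑ i ∈ s, f i) := by
  classical
  induction s using Finset.induction_on with
  | empty => simp [Pval]
  | insert a s hns ih =>
      rw [Finset.sum_insert hns]
      exact (h _ (Finset.mem_insert_self _ _)).add
        (ih fun i hi => h i (Finset.mem_insert_of_mem hi))

variable (S)

lemma mem_O_iff {x : K} : x ∈ S.O ↔ S.Pval 0 x := Iff.rfl

lemma redK_of_mem {x : K} (h : x ∈ S.O) :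
    S.redK x = Ideal.Quotient.mk S.mIdeal ⟨x, h⟩ := dif_pos h

lemma redK_zero : S.redK (0 : K) = 0 := by
  rw [S.redK_of_mem (Subring.zero_mem _)]
  exact map_zero _

lemma redK_one : S.redK (1 : K) = 1 := by
  rw [S.redK_of_mem (Subring.one_mem _)]
  exact map_one _

lemma redK_add {x y : K} (hx : S.Pval 0 x) (hy : S.Pval 0 y) :
    S.redK (x + y) = S.redK x + S.redK y := by
  rw [S.redK_of_mem hx, S.redK_of_mem hy, S.redK_of_mem (Subring.add_mem _ hx hy),
    ← map_add]
  rfl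

lemma redK_mul {x y : K} (hx : S.Pval 0 x) (hy : S.Pval 0 y) :
    S.redK (x * y) = S.redK x * S.redK y := by
  rw [S.redK_of_mem hx, S.redK_of_mem hy, S.redK_of_mem (Subring.mul_mem _ hx hy),
    ← map_mul]
  rfl

lemma redK_neg {x : K} (hx : S.Pval 0 x) :
    S.redK (-x) = -S.redK x := by
  rw [S.redK_of_mem hx, S.redK_of_mem (Subring.neg_mem _ hx), ← map_neg]
  rfl

lemma redK_eq_zero {x : K} (hx : S.Pval 1 x) : S.redK x = 0 := by
  have h0 : x ∈ S.O := (mem_O_iff S).2 (hx.mono (by omega))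
  rw [S.redK_of_mem h0]
  rw [Ideal.Quotient.eq_zero_iff_mem]
  exact hx

lemma isUnit_redK {x : K} (hx : x ≠ 0) (h : S.v x = 0) : IsUnit (S.redK x) := by
  have h1 : S.Pval 0 x := Or.inr h.ge
  have h2 : S.Pval 0 x⁻¹ := Or.inr (by rw [S.v_inv hx, h]; omega)
  refine IsUnit.of_mul_eq_one (S.redK x⁻¹) ?_
  rw [← S.redK_mul h1 h2, mul_inv_cancel₀ hx, S.redK_one]

lemma mkX_pow (n : ℕ) : (S.mkX n) ^ n = 1 := by
  have : (S.mkX n) ^ n - 1 = 0 := by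
    rw [mkX, ← map_pow, ← map_one (Ideal.Quotient.mk _), ← map_sub,
      Ideal.Quotient.eq_zero_iff_mem]
    exact Ideal.subset_span rfl
  linear_combination this

end CDVF

section TraceAux

variable {k K : Type} [Field k] [Field K] [Algebra k K]

lemma traceBound (S : TotallyRamifiedD k K) (t : ℤ) (z : K)
    (hz : S.toCDVF.Pval (1 - S.depth + t) z) :
    Algebra.trace k K z = 0 ∨
      t + 1 ≤ S.toCDVF.v (algebraMap k K (Algebra.trace k K z)) := by
  rcases eq_or_ne z 0 with rfl | hz0
  · exact Or.inl (map_zero _)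
  have hvz : 1 - S.depth + t ≤ S.toCDVF.v z := hz.resolve_left hz0
  obtain ⟨πk, hπk0, hπkv⟩ := S.exists_base_uniformizer
  set n : ℤ := (Module.finrank k K : ℤ) with hn
  have hnpos : 0 < n := by
    have : FiniteDimensional k K := S.finiteDim
    have : 0 < Module.finrank k K := Module.finrank_pos
    omega
  have hπkK : algebraMap k K πk ≠ 0 := by simpa [map_eq_zero] using hπk0
  set q : ℤ := t / n + 1 with hq
  have hq1 : (q - 1) * n ≤ t := by
    have := Int.ediv_mul_le t (b := n) (by omega)
    simpa [hq] using this
  have hq2 : t < q * n := Int.lt_ediv_add_one_mul_self t hnpos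
  set z' : K := z * (algebraMap k K πk) ^ (-q) with hz'def
  have hz'0 : z' ≠ 0 := mul_ne_zero hz0 (zpow_ne_zero _ hπkK)
  have hvz' : S.toCDVF.v z' = S.toCDVF.v z - q * n := by
    rw [hz'def, S.toCDVF.v_mul hz0 (zpow_ne_zero _ hπkK),
      S.toCDVF.v_zpow hπkK, hπkv]
    ring
  have key : 1 - S.depth - n ≤ S.toCDVF.v z' := by
    rw [hvz']
    have : (q - 1) * n = q * n - n := by ring
    omega
  have spec := (S.depth_spec z').2 (Or.inr key) 1
    (Or.inr (by rw [S.toCDVF.v_one]))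
  rw [mul_one] at spec
  have hzz : z = algebraMap k K (πk ^ q) * z' := by
    rw [map_zpow₀, hz'def, ← mul_assoc, mul_comm ((algebraMap k K πk) ^ q),
      mul_assoc, ← zpow_add₀ hπkK]
    simp
  have htr : Algebra.trace k K z = πk ^ q * Algebra.trace k K z' := by
    rw [hzz, ← Algebra.smul_def, map_smul, smul_eq_mul]
  rcases spec with h0 | h0
  · exact Or.inl (by rw [htr, h0, mul_zero])
  rcases eq_or_ne (Algebra.trace k K z) 0 with h1 | h1
  · exact Or.inl h1
  refine Or.inr ?_
  have hz'tr : Algebra.trace k K z' ≠ 0 := by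
    intro h2
    rw [htr, h2, mul_zero] at h1
    exact h1 rfl
  have heq : algebraMap k K (Algebra.trace k K z) =
      (algebraMap k K πk) ^ q * algebraMap k K (Algebra.trace k K z') := by
    rw [htr, map_mul, map_zpow₀]
  rw [heq, S.toCDVF.v_mul (zpow_ne_zero _ hπkK)
    (by simpa [map_eq_zero] using hz'tr), S.toCDVF.v_zpow hπkK, hπkv]
  have := hq2
  omega

lemma expandAux (S : TotallyRamifiedD k K) (π : K) (hπ0 : π ≠ 0)
    (hπ : S.toCDVF.v π = 1) (s : ℕ) :
    ∀ y : K, S.toCDVF.Pval 0 y →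
      ∃ c : ℕ → k, (∀ t, S.toCDVF.Pval 0 (algebraMap k K (c t))) ∧
        S.toCDVF.Pval (s : ℤ)
          (y - ∑ t ∈ Finset.range s, algebraMap k K (c t) * π ^ t) := by
  induction s with
  | zero =>
      intro y hy
      exact ⟨0, fun t => Or.inl (by simp), by simpa using hy⟩
  | succ s ih =>
      intro y hy
      obtain ⟨c, hc, hres⟩ := ih y hy
      set z := y - ∑ t ∈ Finset.range s, algebraMap k K (c t) * π ^ t with hzdef
      rcases eq_or_ne z 0 with hz0 | hz0
      · refine ⟨Function.update c s 0, fun t => ?_, ?_⟩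
        · rcases eq_or_ne t s with rfl | h
          · exact Or.inl (by simp)
          · simpa [Function.update_of_ne h] using hc t
        · rw [Finset.sum_range_succ,
            Finset.sum_congr rfl (fun t ht => by
              rw [Function.update_of_ne (Finset.mem_range.1 ht).ne]),
            Function.update_self]
          refine Or.inl ?_
          rw [map_zero, zero_mul, add_zero, ← hzdef, hz0]
      · have hvz : (s : ℤ) ≤ S.toCDVF.v z := hres.resolve_left hz0
        have hπs : (π : K) ^ (-(s:ℤ)) ≠ 0 := zpow_ne_zero _ hπ0
        have h1 : S.toCDVF.Pval 0 (z * π ^ (-(s:ℤ))) := Or.inr (by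
          rw [S.toCDVF.v_mul hz0 hπs, S.toCDVF.v_zpow hπ0 , hπ]; omega)
        obtain ⟨cs, hcs⟩ := S.residue_trivial (z * π ^ (-(s:ℤ))) h1
        have hcs' : S.toCDVF.Pval 1 (z * π ^ (-(s:ℤ)) - algebraMap k K cs) := hcs
        refine ⟨Function.update c s cs, fun t => ?_, ?_⟩
        · rcases eq_or_ne t s with rfl | h
          · rw [Function.update_self]
            have : algebraMap k K cs =
                z * π ^ (-(t:ℤ)) + -(z * π ^ (-(t:ℤ)) - algebraMap k K cs) := by
              ring
            rw [this]
            exact h1.add ((hcs'.mono (by omega)).neg)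
          · simpa [Function.update_of_ne h] using hc t
        · rw [Finset.sum_range_succ,
            Finset.sum_congr rfl (fun t ht => by
              rw [Function.update_of_ne (Finset.mem_range.1 ht).ne]),
            Function.update_self]
          have hsplit : y - (∑ t ∈ Finset.range s, algebraMap k K (c t) * π ^ t
                + algebraMap k K cs * π ^ s) =
              (z * π ^ (-(s:ℤ)) - algebraMap k K cs) * π ^ (s:ℤ) := by
            have hcancel : (π : K) ^ (-(s:ℤ)) * π ^ (s:ℤ) = 1 := by
              rw [← zpow_add₀ hπ0]; simp
            have hnat : (π : K) ^ (s:ℤ) = π ^ s := zpow_natCast π s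
            calc y - (∑ t ∈ Finset.range s, algebraMap k K (c t) * π ^ t
                + algebraMap k K cs * π ^ s)
                = z - algebraMap k K cs * π ^ s := by rw [hzdef]; ring
              _ = z * (π ^ (-(s:ℤ)) * π ^ (s:ℤ)) - algebraMap k K cs * π ^ (s:ℤ) := by
                  rw [hcancel, hnat, mul_one]
              _ = (z * π ^ (-(s:ℤ)) - algebraMap k K cs) * π ^ (s:ℤ) := by ring
          rw [hsplit]
          exact (hcs'.mul (y := (π:K) ^ (s:ℤ)) (s := (s:ℤ))
            (Or.inr (by simp only [S.toCDVF.v_zpow hπ0, hπ]; omega))).mono (by push_cast; omega)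

lemma cpi_spec (S : TotallyRamifiedD k K) (π : K) (hπ0 : π ≠ 0)
    (hπ : S.toCDVF.v π = 1) :
    Algebra.trace k K (π ^ (-S.depth)) ≠ 0 ∧
      S.toCDVF.v (algebraMap k K (Algebra.trace k K (π ^ (-S.depth)))) = 0 := by
  have hfd : FiniteDimensional k K := S.finiteDim
  set d : ℤ := S.depth with hd
  set cp : k := Algebra.trace k K (π ^ (-d)) with hcp
  set nn : ℕ := Module.finrank k K with hnn
  set n : ℤ := (nn : ℤ) with hn
  have hnpos : 0 < n := by
    have : 0 < Module.finrank k K := Module.finrank_pos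
    omega
  have hπd0 : (π : K) ^ (-d) ≠ 0 := zpow_ne_zero _ hπ0
  have hvπd : S.toCDVF.v (π ^ (-d)) = -d := by
    rw [S.toCDVF.v_zpow hπ0, hπ]; ring
  have hub : cp = 0 ∨ 0 ≤ S.toCDVF.v (algebraMap k K cp) := by
    have := traceBound S (-1) (π ^ (-d)) (Or.inr (by omega))
    rcases this with h | h
    · exact Or.inl h
    · exact Or.inr (by rw [hcp]; omega)
  have hmain : ¬ (cp = 0 ∨ 1 ≤ S.toCDVF.v (algebraMap k K cp)) := by
    intro hcpbad
    have hcpP : S.toCDVF.Pval 1 (algebraMap k K cp) := by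
      rcases hcpbad with h | h
      · exact Or.inl (by rw [h, map_zero])
      · exact Or.inr h
    obtain ⟨πk, hπk0, hπkv⟩ := S.exists_base_uniformizer
    have hπkK : algebraMap k K πk ≠ 0 := by simpa [map_eq_zero] using hπk0
    set x₀ : K := π ^ (-d) * (algebraMap k K πk)⁻¹ with hx₀
    have hx₀0 : x₀ ≠ 0 := mul_ne_zero hπd0 (inv_ne_zero hπkK)
    have hvx₀ : S.toCDVF.v x₀ = -d - n := by
      rw [hx₀, S.toCDVF.v_mul hπd0 (inv_ne_zero hπkK), hvπd,
        S.toCDVF.v_inv hπkK, hπkv]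
      ring
    have hnotR : ¬ (x₀ = 0 ∨
        1 - S.depth - (Module.finrank k K : ℤ) ≤ S.toCDVF.v x₀) := by
      push_neg
      refine ⟨hx₀0, ?_⟩
      rw [hvx₀]
      omega
    have hnotL := mt (S.depth_spec x₀).1 hnotR
    push_neg at hnotL
    obtain ⟨y, hy, htrne, hvneg⟩ := hnotL
    have hy' : S.toCDVF.Pval 0 y := hy
    -- relation between tr(π^{-d} y) and tr(x₀ y)
    have hrel : Algebra.trace k K (π ^ (-d) * y) =
        πk * Algebra.trace k K (x₀ * y) := by
      have h9 : π ^ (-d) * y = algebraMap k K πk * (x₀ * y) := by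
        have h8 : algebraMap k K πk * (π ^ (-d) * (algebraMap k K πk)⁻¹ * y)
            = (algebraMap k K πk * (algebraMap k K πk)⁻¹) * (π ^ (-d) * y) := by
          ring
        rw [hx₀, h8, mul_inv_cancel₀ hπkK, one_mul]
      rw [h9, ← Algebra.smul_def, map_smul, smul_eq_mul]
    have htrx₀ : Algebra.trace k K (x₀ * y) ≠ 0 := htrne
    have htrdne : Algebra.trace k K (π ^ (-d) * y) ≠ 0 := by
      rw [hrel]
      exact mul_ne_zero hπk0 htrx₀
    have hvle : S.toCDVF.v (algebraMap k K (Algebra.trace k K (π ^ (-d) * y))) ≤ 0 := by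
      obtain ⟨c, hc⟩ := S.val_dvd _ htrx₀
      have hvlt : S.toCDVF.v (algebraMap k K (Algebra.trace k K (x₀ * y))) < 0 := by
        omega
      have hcneg : c ≤ -1 := by
        rcases le_or_gt c (-1) with h | h
        · exact h
        · exfalso; nlinarith [hc, hvlt]
      have : S.toCDVF.v (algebraMap k K (Algebra.trace k K (x₀ * y))) ≤ -n := by
        rw [hc]
        nlinarith
      rw [hrel, map_mul,
        S.toCDVF.v_mul hπkK (by simpa [map_eq_zero] using htrx₀), hπkv]
      omega
    -- expansion of y
    obtain ⟨c, hcO, hres⟩ := expandAux S π hπ0 hπ nn y hy'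
    set yn : K := y - ∑ t ∈ Finset.range nn, algebraMap k K (c t) * π ^ t with hyn
    have hsplit : π ^ (-d) * y =
        (∑ t ∈ Finset.range nn, π ^ (-d) * (algebraMap k K (c t) * π ^ t))
          + π ^ (-d) * yn := by
      rw [← Finset.mul_sum, hyn]
      ring
    have hPval1 : S.toCDVF.Pval 1 (algebraMap k K (Algebra.trace k K (π ^ (-d) * y))) := by
      rw [hsplit, map_add, map_sum, map_add, map_sum]
      refine CDVF.Pval.add (CDVF.Pval.sum fun t ht => ?_) ?_
      · -- term t
        have htr : Algebra.trace k K (π ^ (-d) * (algebraMap k K (c t) * π ^ t)) =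
            c t * Algebra.trace k K (π ^ (-d) * π ^ t) := by
          rw [show π ^ (-d) * (algebraMap k K (c t) * π ^ t)
              = algebraMap k K (c t) * (π ^ (-d) * π ^ t) by ring,
            ← Algebra.smul_def, map_smul, smul_eq_mul]
        rw [htr, map_mul]
        have hcoeff : S.toCDVF.Pval 0 (algebraMap k K (c t)) := hcO t
        have hterm : S.toCDVF.Pval 1
            (algebraMap k K (Algebra.trace k K (π ^ (-d) * π ^ t))) := by
          rcases Nat.eq_zero_or_pos t with rfl | htpos
          · rw [pow_zero, mul_one]
            exact hcp ▸ hcpP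
          · have harg : π ^ (-d) * π ^ t = π ^ ((t : ℤ) - d) := by
              rw [← zpow_natCast π t, ← zpow_add₀ hπ0]
              ring_nf
            rw [harg]
            have := traceBound S 0 (π ^ ((t : ℤ) - d))
              (Or.inr (by simp only [S.toCDVF.v_zpow hπ0, hπ]; omega))
            rcases this with h | h
            · exact Or.inl (by rw [h, map_zero])
            · exact Or.inr h
        have := hcoeff.mul hterm
        simpa using this
      · -- tail
        have := traceBound S 0 (π ^ (-d) * yn) ?_
        · rcases this with h | h
          · exact Or.inl (by rw [h, map_zero])
          · exact Or.inr h
        · rcases eq_or_ne yn 0 with hyn0 | hyn0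
          · exact Or.inl (by rw [hyn0, mul_zero])
          · have hvyn : (nn : ℤ) ≤ S.toCDVF.v yn := hres.resolve_left hyn0
            refine Or.inr ?_
            rw [S.toCDVF.v_mul hπd0 hyn0, hvπd]
            omega
    rcases hPval1 with h | h
    · exact htrdne (by simpa [map_eq_zero] using h)
    · omega
  push_neg at hmain
  refine ⟨hmain.1, ?_⟩
  have h1 := hub.resolve_left hmain.1
  have h2 := hmain.2
  omega

end TraceAux

section GAAux

variable {k K : Type} [Field k] [Field K] [Algebra k K]

lemma applyGA_zero (x : K) :
    applyGA k (0 : MonoidAlgebra K (K ≃ₐ[k] K)) x = 0 :=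
  Finsupp.sum_zero_index

lemma applyGA_add (f g : MonoidAlgebra K (K ≃ₐ[k] K)) (x : K) :
    applyGA k (f + g) x = applyGA k f x + applyGA k g x :=
  Finsupp.sum_add_index' (fun _ => zero_mul _) (fun _ b c => add_mul b c _)

lemma applyGA_neg (f : MonoidAlgebra K (K ≃ₐ[k] K)) (x : K) :
    applyGA k (-f) x = -applyGA k f x := by
  have h := applyGA_add (-f) f x
  rw [neg_add_cancel, applyGA_zero] at h
  exact eq_neg_of_add_eq_zero_left h.symm

/-- Evaluation at `x` as an additive monoid homomorphism. -/
def evalHom (x : K) : MonoidAlgebra K (K ≃ₐ[k] K) →+ K where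
  toFun f := applyGA k f x
  map_zero' := applyGA_zero x
  map_add' f g := applyGA_add f g x

lemma applyGA_single (σ : K ≃ₐ[k] K) (c x : K) :
    applyGA k (MonoidAlgebra.single σ c) x = c * σ x :=
  Finsupp.sum_single_index (zero_mul _)

lemma applyGA_phi_tmul [FiniteDimensional k K] [IsGalois k K] (a b x : K) :
    applyGA k (phiGA k K (a ⊗ₜ[k] b)) x
      = a * algebraMap k K (Algebra.trace k K (b * x)) := by
  have h1 : phiGA k K (a ⊗ₜ[k] b)
      = ∑ σ : K ≃ₐ[k] K, MonoidAlgebra.single σ (a * σ b) := by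
    simp only [phiGA, TensorProduct.lift.tmul, LinearMap.coe_mk, AddHom.coe_mk]
  rw [h1]
  have h2 : applyGA k (∑ σ : K ≃ₐ[k] K, MonoidAlgebra.single σ (a * σ b)) x
      = ∑ σ : K ≃ₐ[k] K, applyGA k (MonoidAlgebra.single σ (a * σ b)) x :=
    map_sum (evalHom x) _ _
  rw [h2, Finset.sum_congr rfl (fun σ _ => applyGA_single σ (a * σ b) x),
    trace_eq_sum_automorphisms, Finset.mul_sum]
  refine Finset.sum_congr rfl fun σ _ => ?_
  rw [map_mul]
  ring

lemma mem_Xfil_tmul (S : CDVF K) {i : ℤ} (j : ℤ) {x y : K}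
    (hx : S.Pval j x) (hy : S.Pval (i - j) y) : x ⊗ₜ[k] y ∈ Xfil k K S i :=
  AddSubgroup.subset_closure ⟨x, y, j, hx, hy, rfl⟩

lemma Xfil_mono (S : CDVF K) {i i' : ℤ} (h : i ≤ i') :
    Xfil k K S i' ≤ Xfil k K S i := by
  apply AddSubgroup.closure_mono
  rintro z ⟨x, y, j, hx, hy, rfl⟩
  exact ⟨x, y, j, hx, hy.imp id (fun hh => le_trans (by omega) hh), rfl⟩

section PsiAux

variable (S : CDVF K) (n : ℕ) (π : K)
variable (ψ : K ⊗[k] K → S.Rring n)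

lemma psi_zero (hψ : IsRX k K S n π ψ) : ψ 0 = 0 := by
  have h := hψ.1 0 0 (AddSubgroup.zero_mem _) (AddSubgroup.zero_mem _)
  rw [add_zero] at h
  exact (left_eq_add.mp h)

lemma psi_neg (hψ : IsRX k K S n π ψ) {z : K ⊗[k] K}
    (hz : z ∈ Xfil k K S 0) : ψ (-z) = -ψ z := by
  have h := hψ.1 z (-z) hz (AddSubgroup.neg_mem _ hz)
  rw [add_neg_cancel, psi_zero S n π ψ hψ] at h
  exact eq_neg_of_add_eq_zero_right h.symm

/-- The class of `X` in `R` as a unit. -/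
def xiUnit (hn : 0 < n) : (S.Rring n)ˣ where
  val := S.mkX n
  inv := (S.mkX n) ^ (n - 1)
  val_inv := by
    rw [← pow_succ']
    have : n - 1 + 1 = n := by omega
    rw [this, S.mkX_pow n]
  inv_val := by
    rw [← pow_succ]
    have : n - 1 + 1 = n := by omega
    rw [this, S.mkX_pow n]

lemma psi_pi_pow (hn : 0 < n) (hπ0 : π ≠ 0) (hπ : S.v π = 1)
    (hψ : IsRX k K S n π ψ) (m : ℤ) :
    ψ ((π ^ m) ⊗ₜ[k] (π ^ (-m))) = (S.mkX n) ^ ((m % (n : ℤ)).toNat) := by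
  set ξ : (S.Rring n)ˣ := xiUnit S n hn with hξ
  have hξval : (ξ : S.Rring n) = S.mkX n := rfl
  have hmem : ∀ m' : ℤ, (π ^ m') ⊗ₜ[k] (π ^ (-m')) ∈ Xfil k K S 0 := fun m' =>
    mem_Xfil_tmul S m' (Or.inr (by rw [S.v_zpow hπ0, hπ]; omega))
      (Or.inr (by rw [S.v_zpow hπ0, hπ]; omega))
  have hsplitmul : ∀ m' : ℤ, ψ ((π ^ m') ⊗ₜ[k] (π ^ (-m')))
      = ψ ((π ^ (m' - 1)) ⊗ₜ[k] (π ^ (-(m' - 1)))) * S.mkX n := by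
    intro m'
    have hmul : ((π ^ (m' - 1)) ⊗ₜ[k] (π ^ (-(m' - 1)))) * (π ⊗ₜ[k] π⁻¹)
        = (π ^ m') ⊗ₜ[k] (π ^ (-m')) := by
      rw [Algebra.TensorProduct.tmul_mul_tmul]
      congr 1
      · rw [← zpow_add_one₀ hπ0]
        congr 1
        ring
      · rw [show (π : K)⁻¹ = π ^ (-1 : ℤ) by simp, ← zpow_add₀ hπ0]
        congr 1
        ring
    have hmemπ : (π ⊗ₜ[k] π⁻¹) ∈ Xfil k K S 0 :=
      mem_Xfil_tmul S 1 (Or.inr (by rw [hπ]))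
        (Or.inr (by rw [S.v_inv hπ0, hπ]; omega))
    rw [← hmul, hψ.2.1 _ _ (hmem _) hmemπ, hψ.2.2.2.2.1]
  have hF : ∀ m' : ℤ, ψ ((π ^ m') ⊗ₜ[k] (π ^ (-m'))) = ((ξ ^ m' : (S.Rring n)ˣ) : S.Rring n) := by
    intro m'
    induction m' using Int.induction_on with
    | zero =>
        simp only [neg_zero, zpow_zero]
        rw [← Algebra.TensorProduct.one_def, hψ.2.2.1, Units.val_one]
    | succ j ih =>
        have h := hsplitmul ((j : ℤ) + 1)
        rw [show ((j:ℤ) + 1 - 1) = (j:ℤ) by ring] at h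
        rw [h, ih, ← hξval, ← Units.val_mul, ← zpow_add_one]
    | pred j ih =>
        have h := hsplitmul (-(j : ℤ))
        rw [ih] at h
        calc ψ ((π ^ (-(j:ℤ) - 1)) ⊗ₜ[k] (π ^ (-(-(j:ℤ) - 1))))
            = (ψ ((π ^ (-(j:ℤ) - 1)) ⊗ₜ[k] (π ^ (-(-(j:ℤ) - 1)))) * (ξ : S.Rring n))
                * ((ξ⁻¹ : (S.Rring n)ˣ) : S.Rring n) := by
              rw [mul_assoc, ← Units.val_mul, mul_inv_cancel, Units.val_one, mul_one]
          _ = ((ξ ^ (-(j:ℤ)) : (S.Rring n)ˣ) : S.Rring n)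
                * ((ξ⁻¹ : (S.Rring n)ˣ) : S.Rring n) := by rw [hξval, ← h]
          _ = ((ξ ^ (-(j:ℤ) - 1) : (S.Rring n)ˣ) : S.Rring n) := by
              rw [← Units.val_mul, ← zpow_sub_one]
  rw [hF m]
  have hxin : ξ ^ (n : ℤ) = 1 := by
    ext
    rw [zpow_natCast]
    rw [Units.val_pow_eq_pow_val, hξval, S.mkX_pow n, Units.val_one]
  have hsplit : ξ ^ m = ξ ^ (m % (n : ℤ)) := by
    conv_lhs => rw [← Int.emod_add_mul_ediv m (n : ℤ)]
    rw [zpow_add, zpow_mul, hxin, one_zpow, mul_one]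
  rw [hsplit]
  conv_lhs => rw [show (m % (n:ℤ)) = ((m % (n:ℤ)).toNat : ℤ) by
      rw [Int.toNat_of_nonneg (Int.emod_nonneg m (by omega))]]
  rw [zpow_natCast, Units.val_pow_eq_pow_val, hξval]

end PsiAux

section PGAAux

variable [FiniteDimensional k K] (S : TotallyRamifiedD k K) (π : K) (i0 : ℤ)

lemma pGA_zero : pGA k S π i0 (0 : MonoidAlgebra K (K ≃ₐ[k] K)) = 0 := by
  unfold pGA
  have : ∀ j ∈ Finset.range (Module.finrank k K),
      (algebraMap S.toCDVF.Residue (S.toCDVF.Rring (Module.finrank k K))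
          (S.toCDVF.redK (applyGA k (0 : MonoidAlgebra K (K ≃ₐ[k] K))
            (π ^ ((j:ℤ) - i0)) / π ^ j)))
        * (S.toCDVF.mkX (Module.finrank k K)) ^ j = 0 := by
    intro j _
    rw [applyGA_zero, zero_div, CDVF.redK_zero, map_zero, zero_mul]
  rw [Finset.sum_congr rfl this]
  simp

lemma pGA_add (f g : MonoidAlgebra K (K ≃ₐ[k] K))
    (hf : ∀ j ∈ Finset.range (Module.finrank k K),
      S.toCDVF.Pval 0 (applyGA k f (π ^ ((j:ℤ) - i0)) / π ^ j))
    (hg : ∀ j ∈ Finset.range (Module.finrank k K),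
      S.toCDVF.Pval 0 (applyGA k g (π ^ ((j:ℤ) - i0)) / π ^ j)) :
    pGA k S π i0 (f + g) = pGA k S π i0 f + pGA k S π i0 g := by
  unfold pGA
  rw [← mul_add, ← Finset.sum_add_distrib]
  congr 1
  refine Finset.sum_congr rfl fun j hj => ?_
  rw [applyGA_add, add_div, S.toCDVF.redK_add (hf j hj) (hg j hj), map_add,
    add_mul]

lemma pGA_neg (f : MonoidAlgebra K (K ≃ₐ[k] K))
    (hf : ∀ j ∈ Finset.range (Module.finrank k K),
      S.toCDVF.Pval 0 (applyGA k f (π ^ ((j:ℤ) - i0)) / π ^ j)) :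
    pGA k S π i0 (-f) = -pGA k S π i0 f := by
  unfold pGA
  have hterm : ∀ j ∈ Finset.range (Module.finrank k K),
      (algebraMap S.toCDVF.Residue (S.toCDVF.Rring (Module.finrank k K))
          (S.toCDVF.redK (applyGA k (-f) (π ^ ((j:ℤ) - i0)) / π ^ j)))
        * (S.toCDVF.mkX (Module.finrank k K)) ^ j
      = -((algebraMap S.toCDVF.Residue (S.toCDVF.Rring (Module.finrank k K))
          (S.toCDVF.redK (applyGA k f (π ^ ((j:ℤ) - i0)) / π ^ j)))
        * (S.toCDVF.mkX (Module.finrank k K)) ^ j) := fun j hj => by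
    rw [applyGA_neg, neg_div, S.toCDVF.redK_neg (hf j hj), map_neg]
    ring
  rw [Finset.sum_congr rfl hterm]
  rw [Finset.sum_neg_distrib]
  ring

end PGAAux

end GAAux

section KeyAux

variable {k K : Type} [Field k] [Field K] [Algebra k K]
variable [FiniteDimensional k K] [IsGalois k K]

lemma key_zero (S : TotallyRamifiedD k K) (π : K) (i : ℤ)
    (ψ : K ⊗[k] K → S.toCDVF.Rring (Module.finrank k K))
    (hψ : IsRX k K S.toCDVF (Module.finrank k K) π ψ) :
    ((0 : K ⊗[k] K) * ((1:K) ⊗ₜ[k] (π ^ (-i))) ∈ Xfil k K S.toCDVF 0) ∧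
    (∀ j ∈ Finset.range (Module.finrank k K),
      S.toCDVF.Pval 0 (applyGA k (phiGA k K (0 : K ⊗[k] K))
        (π ^ ((j:ℤ) - (S.depth + i))) / π ^ j)) ∧
    ψ ((0 : K ⊗[k] K) * ((1:K) ⊗ₜ[k] (π ^ (-i))))
      = pGA k S π (S.depth + i) (phiGA k K (0 : K ⊗[k] K)) := by
  rw [zero_mul, map_zero]
  exact ⟨AddSubgroup.zero_mem _,
    fun j _ => Or.inl (by rw [applyGA_zero, zero_div]),
    by rw [psi_zero S.toCDVF _ π ψ hψ, pGA_zero]⟩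

set_option maxHeartbeats 2000000 in
lemma key_tmul (S : TotallyRamifiedD k K) (π : K) (hπ0 : π ≠ 0)
    (hπ : S.toCDVF.v π = 1)
    (ψ : K ⊗[k] K → S.toCDVF.Rring (Module.finrank k K))
    (hψ : IsRX k K S.toCDVF (Module.finrank k K) π ψ)
    (i j₀ : ℤ) (a b : K)
    (ha : a = 0 ∨ j₀ ≤ S.toCDVF.v a) (hb : b = 0 ∨ i - j₀ ≤ S.toCDVF.v b) :
    ((a ⊗ₜ[k] b) * ((1:K) ⊗ₜ[k] (π ^ (-i))) ∈ Xfil k K S.toCDVF 0) ∧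
    (∀ j ∈ Finset.range (Module.finrank k K),
      S.toCDVF.Pval 0 (applyGA k (phiGA k K (a ⊗ₜ[k] b))
        (π ^ ((j:ℤ) - (S.depth + i))) / π ^ j)) ∧
    ψ ((a ⊗ₜ[k] b) * ((1:K) ⊗ₜ[k] (π ^ (-i))))
      = pGA k S π (S.depth + i) (phiGA k K (a ⊗ₜ[k] b)) := by
  rcases eq_or_ne a 0 with rfl | ha0
  · rw [TensorProduct.zero_tmul]; exact key_zero S π i ψ hψ
  rcases eq_or_ne b 0 with rfl | hb0
  · rw [TensorProduct.tmul_zero]; exact key_zero S π i ψ hψ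
  have hnpos : 0 < Module.finrank k K := Module.finrank_pos
  obtain ⟨πk, hπk0, hπkv⟩ := S.exists_base_uniformizer
  have hπkK : algebraMap k K πk ≠ 0 := by simpa [map_eq_zero] using hπk0
  obtain ⟨hcπ0, hcπv⟩ := cpi_spec S π hπ0 hπ
  have hcπ0K : algebraMap k K (Algebra.trace k K (π ^ (-S.depth))) ≠ 0 := by
    simpa [map_eq_zero] using hcπ0
  have hcπO : S.toCDVF.Pval 0
      (algebraMap k K (Algebra.trace k K (π ^ (-S.depth)))) := Or.inr hcπv.ge
  set m : ℤ := S.toCDVF.v a with hm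
  have hvb : i - m ≤ S.toCDVF.v b := by
    have h1 := ha.resolve_left ha0
    have h2 := hb.resolve_left hb0
    omega
  set w : ℤ := m + S.toCDVF.v b - i with hw
  have hw0 : 0 ≤ w := by omega
  have hvbw : S.toCDVF.v b = i - m + w := by omega
  have hprod : (a ⊗ₜ[k] b) * ((1:K) ⊗ₜ[k] (π ^ (-i))) = a ⊗ₜ[k] (b * π ^ (-i)) := by
    rw [Algebra.TensorProduct.tmul_mul_tmul, mul_one]
  have hvbi : S.toCDVF.v (b * π ^ (-i)) = w - m := by
    rw [S.toCDVF.v_mul hb0 (zpow_ne_zero _ hπ0), S.toCDVF.v_zpow hπ0, hπ]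
    omega
  have hbi0 : b * π ^ (-i) ≠ 0 := mul_ne_zero hb0 (zpow_ne_zero _ hπ0)
  have hmem1 : a ⊗ₜ[k] (b * π ^ (-i)) ∈ Xfil k K S.toCDVF 0 :=
    mem_Xfil_tmul _ m (Or.inr (le_of_eq hm)) (Or.inr (by rw [hvbi]; omega))
  rw [hprod]
  have hTr : ∀ j : ℕ, S.toCDVF.Pval ((j:ℤ) - m + w)
      (algebraMap k K (Algebra.trace k K (b * π ^ ((j:ℤ) - (S.depth + i))))) := by
    intro j
    rcases traceBound S ((j:ℤ) - m + w - 1) (b * π ^ ((j:ℤ) - (S.depth + i)))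
      (Or.inr (by
        rw [S.toCDVF.v_mul hb0 (zpow_ne_zero _ hπ0), S.toCDVF.v_zpow hπ0, hπ]
        omega)) with h | h
    · exact Or.inl (by rw [h, map_zero])
    · exact Or.inr (by omega)
  have hPg : ∀ j : ℕ, S.toCDVF.Pval w
      (applyGA k (phiGA k K (a ⊗ₜ[k] b)) (π ^ ((j:ℤ) - (S.depth + i))) / π ^ j) := by
    intro j
    rw [applyGA_phi_tmul, div_eq_mul_inv]
    have h1 : S.toCDVF.Pval (-(j:ℤ)) ((π ^ j : K)⁻¹) := Or.inr (by
      rw [S.toCDVF.v_inv (pow_ne_zero _ hπ0), S.toCDVF.v_pow hπ0, hπ]; omega)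
    have h2 : S.toCDVF.Pval m a := Or.inr (le_of_eq hm)
    have h3 := (h2.mul (hTr j)).mul h1
    have he : m + ((j:ℤ) - m + w) + -(j:ℤ) = w := by ring
    rwa [he] at h3
  have hmem2 : ∀ j ∈ Finset.range (Module.finrank k K),
      S.toCDVF.Pval 0 (applyGA k (phiGA k K (a ⊗ₜ[k] b))
        (π ^ ((j:ℤ) - (S.depth + i))) / π ^ j) := fun j _ => (hPg j).mono hw0
  rcases lt_or_eq_of_le hw0 with hwpos | hweq
  · -- excess valuation: both sides vanish
    refine ⟨hmem1, hmem2, ?_⟩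
    have hRHS : pGA k S π (S.depth + i) (phiGA k K (a ⊗ₜ[k] b)) = 0 := by
      unfold pGA
      have hz : ∀ j ∈ Finset.range (Module.finrank k K),
          (algebraMap S.toCDVF.Residue (S.toCDVF.Rring (Module.finrank k K))
            (S.toCDVF.redK (applyGA k (phiGA k K (a ⊗ₜ[k] b))
              (π ^ ((j:ℤ) - (S.depth + i))) / π ^ j)))
            * (S.toCDVF.mkX (Module.finrank k K)) ^ j = 0 := fun j _ => by
        rw [S.toCDVF.redK_eq_zero ((hPg j).mono (by omega)), map_zero, zero_mul]
      rw [Finset.sum_congr rfl hz]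
      simp
    have hX1 : a ⊗ₜ[k] (b * π ^ (-i)) ∈ Xfil k K S.toCDVF 1 :=
      mem_Xfil_tmul _ m (Or.inr (le_of_eq hm)) (Or.inr (by rw [hvbi]; omega))
    rw [hRHS, hψ.2.2.2.1 _ hX1]
  · -- exact valuation case : w = 0
    have hwz : w = 0 := hweq.symm
    set Q : ℤ := m / (Module.finrank k K : ℤ) with hQ
    set j₀ℕ : ℕ := (m % (Module.finrank k K : ℤ)).toNat with hj₀
    have hj₀v : (j₀ℕ : ℤ) = m % (Module.finrank k K : ℤ) :=
      Int.toNat_of_nonneg (Int.emod_nonneg m (by omega))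
    have hj₀lt : j₀ℕ < Module.finrank k K := by
      have := Int.emod_lt_of_pos m (show (0:ℤ) < (Module.finrank k K : ℤ) by omega)
      omega
    have hQm : m = (Module.finrank k K : ℤ) * Q + (j₀ℕ : ℤ) := by
      rw [hj₀v, hQ]
      exact (Int.mul_ediv_add_emod m _).symm
    -- the auxiliary unit u₃ and A₄
    set u₃ : K := b * π ^ ((j₀ℕ:ℤ) - i) * (algebraMap k K πk) ^ Q with hu₃
    have hu₃0 : u₃ ≠ 0 :=
      mul_ne_zero (mul_ne_zero hb0 (zpow_ne_zero _ hπ0)) (zpow_ne_zero _ hπkK)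
    have hu₃v : S.toCDVF.v u₃ = 0 := by
      rw [hu₃, S.toCDVF.v_mul (mul_ne_zero hb0 (zpow_ne_zero _ hπ0))
        (zpow_ne_zero _ hπkK), S.toCDVF.v_mul hb0 (zpow_ne_zero _ hπ0),
        S.toCDVF.v_zpow hπ0, hπ, S.toCDVF.v_zpow hπkK, hπkv]
      have h9 : Q * (Module.finrank k K : ℤ) = (Module.finrank k K : ℤ) * Q := by ring
      linarith [hQm, hvbw, hwz]
    have hu₃O : S.toCDVF.Pval 0 u₃ := Or.inr hu₃v.ge
    set A₄ : K := a * (algebraMap k K πk) ^ (-Q) * π ^ (-(j₀ℕ:ℤ)) with hA₄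
    have hA₄0 : A₄ ≠ 0 :=
      mul_ne_zero (mul_ne_zero ha0 (zpow_ne_zero _ hπkK)) (zpow_ne_zero _ hπ0)
    have hA₄v : S.toCDVF.v A₄ = 0 := by
      rw [hA₄, S.toCDVF.v_mul (mul_ne_zero ha0 (zpow_ne_zero _ hπkK))
        (zpow_ne_zero _ hπ0), S.toCDVF.v_mul ha0 (zpow_ne_zero _ hπkK),
        S.toCDVF.v_zpow hπkK, hπkv, S.toCDVF.v_zpow hπ0, hπ, ← hm]
      have h9 : -Q * (Module.finrank k K : ℤ) = -((Module.finrank k K : ℤ) * Q) := by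
        ring
      linarith [hQm]
    have hA₄O : S.toCDVF.Pval 0 A₄ := Or.inr hA₄v.ge
    -- identity A and the trace relation
    have hA : b * π ^ ((j₀ℕ:ℤ) - (S.depth + i))
        = algebraMap k K (πk ^ (-Q)) * (u₃ * π ^ (-S.depth)) := by
      rw [map_zpow₀, hu₃]
      have h1 : (algebraMap k K πk) ^ (-Q)
            * (b * π ^ ((j₀ℕ:ℤ) - i) * (algebraMap k K πk) ^ Q * π ^ (-S.depth))
          = ((algebraMap k K πk) ^ (-Q) * (algebraMap k K πk) ^ Q) * b
            * (π ^ ((j₀ℕ:ℤ) - i) * π ^ (-S.depth)) := by ring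
      rw [h1, ← zpow_add₀ hπkK, neg_add_cancel, zpow_zero, one_mul,
        ← zpow_add₀ hπ0,
        show ((j₀ℕ:ℤ) - i) + (-S.depth) = (j₀ℕ:ℤ) - (S.depth + i) by ring]
    have htrA : Algebra.trace k K (b * π ^ ((j₀ℕ:ℤ) - (S.depth + i)))
        = πk ^ (-Q) * Algebra.trace k K (u₃ * π ^ (-S.depth)) := by
      rw [hA, ← Algebra.smul_def, map_smul, smul_eq_mul]
    -- residue expansion of u₃
    obtain ⟨c₂, hc₂⟩ := S.residue_trivial u₃ (Or.inr hu₃v.ge)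
    have hc₂P : S.toCDVF.Pval 1 (u₃ - algebraMap k K c₂) := hc₂
    have hc₂O : S.toCDVF.Pval 0 (algebraMap k K c₂) := by
      have h1 : algebraMap k K c₂ = u₃ + -(u₃ - algebraMap k K c₂) := by ring
      rw [h1]
      exact CDVF.Pval.add (Or.inr hu₃v.ge) ((hc₂P.mono (by omega)).neg)
    have htr₃ : Algebra.trace k K (u₃ * π ^ (-S.depth))
        = c₂ * Algebra.trace k K (π ^ (-S.depth))
          + Algebra.trace k K ((u₃ - algebraMap k K c₂) * π ^ (-S.depth)) := by
      have hsp : u₃ * π ^ (-S.depth) = algebraMap k K c₂ * π ^ (-S.depth)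
          + (u₃ - algebraMap k K c₂) * π ^ (-S.depth) := by ring
      rw [hsp, map_add, ← Algebra.smul_def, map_smul, smul_eq_mul]
    have harg : S.toCDVF.Pval (1 - S.depth + 0)
        ((u₃ - algebraMap k K c₂) * π ^ (-S.depth)) := by
      have hπd : S.toCDVF.Pval (-S.depth) ((π : K) ^ (-S.depth)) :=
        Or.inr (by simp only [S.toCDVF.v_zpow hπ0, hπ]; omega)
      exact (hc₂P.mul hπd).mono (by omega)
    have htail : S.toCDVF.Pval 1 (algebraMap k K (Algebra.trace k K
        ((u₃ - algebraMap k K c₂) * π ^ (-S.depth)))) := by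
      rcases traceBound S 0 ((u₃ - algebraMap k K c₂) * π ^ (-S.depth)) harg
        with h | h
      · exact Or.inl (by rw [h, map_zero])
      · exact Or.inr h
    have hu₃red : S.toCDVF.redK u₃ = S.toCDVF.redK (algebraMap k K c₂) := by
      have hsp : u₃ = algebraMap k K c₂ + (u₃ - algebraMap k K c₂) := by ring
      conv_lhs => rw [hsp]
      rw [S.toCDVF.redK_add hc₂O (hc₂P.mono (by omega)),
        S.toCDVF.redK_eq_zero hc₂P, add_zero]
    have hredT : S.toCDVF.redK (algebraMap k K (Algebra.trace k K
          (u₃ * π ^ (-S.depth))))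
        = S.toCDVF.redK u₃
          * S.toCDVF.redK (algebraMap k K (Algebra.trace k K (π ^ (-S.depth)))) := by
      rw [htr₃, map_add, map_mul,
        S.toCDVF.redK_add ((hc₂O.mul hcπO).mono (by omega)) (htail.mono (by omega)),
        S.toCDVF.redK_mul hc₂O hcπO, S.toCDVF.redK_eq_zero htail, add_zero, hu₃red]
    have htru₃O : S.toCDVF.Pval 0
        (algebraMap k K (Algebra.trace k K (u₃ * π ^ (-S.depth)))) := by
      rw [htr₃, map_add, map_mul]
      exact CDVF.Pval.add ((hc₂O.mul hcπO).mono (by omega)) (htail.mono (by omega))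
    -- the value of the distinguished term
    have hgj₀ : applyGA k (phiGA k K (a ⊗ₜ[k] b))
          (π ^ ((j₀ℕ:ℤ) - (S.depth + i))) / π ^ j₀ℕ
        = A₄ * algebraMap k K (Algebra.trace k K (u₃ * π ^ (-S.depth))) := by
      rw [applyGA_phi_tmul, htrA, map_mul, map_zpow₀, div_eq_mul_inv]
      have hpow : ((π : K) ^ j₀ℕ)⁻¹ = π ^ (-(j₀ℕ:ℤ)) := by
        rw [← zpow_natCast π j₀ℕ, ← zpow_neg]
      rw [hpow, hA₄]
      ring
    have hABu : A₄ * u₃ = a * b * π ^ (-i) := by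
      rw [hA₄, hu₃]
      have h1 : a * (algebraMap k K πk) ^ (-Q) * π ^ (-(j₀ℕ:ℤ))
            * (b * π ^ ((j₀ℕ:ℤ) - i) * (algebraMap k K πk) ^ Q)
          = ((algebraMap k K πk) ^ (-Q) * (algebraMap k K πk) ^ Q) * (a * b)
            * (π ^ (-(j₀ℕ:ℤ)) * π ^ ((j₀ℕ:ℤ) - i)) := by ring
      rw [h1, ← zpow_add₀ hπkK, neg_add_cancel, zpow_zero, one_mul,
        ← zpow_add₀ hπ0, show (-(j₀ℕ:ℤ)) + ((j₀ℕ:ℤ) - i) = -i by ring]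
    have hredgj₀ : S.toCDVF.redK (applyGA k (phiGA k K (a ⊗ₜ[k] b))
          (π ^ ((j₀ℕ:ℤ) - (S.depth + i))) / π ^ j₀ℕ)
        = S.toCDVF.redK (a * b * π ^ (-i))
          * S.toCDVF.redK (algebraMap k K (Algebra.trace k K (π ^ (-S.depth)))) := by
      rw [hgj₀, S.toCDVF.redK_mul hA₄O htru₃O, hredT, ← mul_assoc,
        ← S.toCDVF.redK_mul hA₄O hu₃O, hABu]
    -- the other terms vanish
    have hPg1 : ∀ j ∈ Finset.range (Module.finrank k K), j ≠ j₀ℕ →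
        S.toCDVF.Pval 1 (applyGA k (phiGA k K (a ⊗ₜ[k] b))
          (π ^ ((j:ℤ) - (S.depth + i))) / π ^ j) := by
      intro j hj hne
      rcases eq_or_ne (Algebra.trace k K (b * π ^ ((j:ℤ) - (S.depth + i)))) 0
        with h0 | h0
      · exact Or.inl (by rw [applyGA_phi_tmul, h0, map_zero, mul_zero, zero_div])
      · have halgne : algebraMap k K
            (Algebra.trace k K (b * π ^ ((j:ℤ) - (S.depth + i)))) ≠ 0 := by
          simpa [map_eq_zero] using h0
        have hbd := (hTr j).resolve_left halgne
        obtain ⟨c, hc⟩ := S.val_dvd _ h0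
        have hjlt : (j:ℤ) < (Module.finrank k K : ℤ) := by
          have := Finset.mem_range.1 hj
          omega
        have hj₀lt' : (j₀ℕ:ℤ) < (Module.finrank k K : ℤ) := by omega
        have hnediv : S.toCDVF.v (algebraMap k K
            (Algebra.trace k K (b * π ^ ((j:ℤ) - (S.depth + i))))) ≠ (j:ℤ) - m := by
          intro heq
          rw [heq] at hc
          have h5 : (j:ℤ) - (j₀ℕ:ℤ) = (Module.finrank k K : ℤ) * (c + Q) := by
            have h6 : (Module.finrank k K : ℤ) * (c + Q)
                = (Module.finrank k K : ℤ) * c + (Module.finrank k K : ℤ) * Q := by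
              ring
            linarith [hQm, hc, h6]
          have h7 : c + Q = 0 := by
            by_contra h8
            rcases lt_or_gt_of_ne h8 with h9 | h9
            · nlinarith
            · nlinarith
          rw [h7, mul_zero] at h5
          have : (j:ℤ) = (j₀ℕ:ℤ) := by omega
          exact hne (by exact_mod_cast this)
        have hge : (j:ℤ) - m + 1 ≤ S.toCDVF.v (algebraMap k K
            (Algebra.trace k K (b * π ^ ((j:ℤ) - (S.depth + i))))) := by
          omega
        refine Or.inr ?_
        rw [applyGA_phi_tmul, div_eq_mul_inv,
          S.toCDVF.v_mul (mul_ne_zero ha0 halgne)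
            (inv_ne_zero (pow_ne_zero _ hπ0)),
          S.toCDVF.v_mul ha0 halgne,
          S.toCDVF.v_inv (pow_ne_zero _ hπ0), S.toCDVF.v_pow hπ0, hπ, ← hm]
        omega
    -- assemble the right-hand side
    have hCunit : IsUnit (algebraMap S.toCDVF.Residue
        (S.toCDVF.Rring (Module.finrank k K))
        (S.toCDVF.redK (algebraMap k K (Algebra.trace k K (π ^ (-S.depth)))))) :=
      (S.toCDVF.isUnit_redK hcπ0K hcπv).map _
    have hRHS : pGA k S π (S.depth + i) (phiGA k K (a ⊗ₜ[k] b))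
        = algebraMap S.toCDVF.Residue (S.toCDVF.Rring (Module.finrank k K))
            (S.toCDVF.redK (a * b * π ^ (-i)))
          * (S.toCDVF.mkX (Module.finrank k K)) ^ j₀ℕ := by
      unfold pGA
      rw [Finset.sum_eq_single_of_mem j₀ℕ (Finset.mem_range.mpr hj₀lt)
        (fun j hj hne => by
          rw [S.toCDVF.redK_eq_zero (hPg1 j hj hne), map_zero, zero_mul])]
      rw [hredgj₀, map_mul]
      rw [show (algebraMap S.toCDVF.Residue (S.toCDVF.Rring (Module.finrank k K))
            (S.toCDVF.redK (a * b * π ^ (-i)))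
          * algebraMap S.toCDVF.Residue (S.toCDVF.Rring (Module.finrank k K))
            (S.toCDVF.redK (algebraMap k K (Algebra.trace k K (π ^ (-S.depth)))))
          * (S.toCDVF.mkX (Module.finrank k K)) ^ j₀ℕ)
        = (algebraMap S.toCDVF.Residue (S.toCDVF.Rring (Module.finrank k K))
            (S.toCDVF.redK (algebraMap k K (Algebra.trace k K (π ^ (-S.depth))))))
          * (algebraMap S.toCDVF.Residue (S.toCDVF.Rring (Module.finrank k K))
            (S.toCDVF.redK (a * b * π ^ (-i)))
          * (S.toCDVF.mkX (Module.finrank k K)) ^ j₀ℕ) by ring]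
      rw [Ring.inverse_mul_cancel_left _ _ hCunit]
    -- the left-hand side
    have hvaπ : S.toCDVF.v (a * π ^ (-m)) = 0 := by
      rw [S.toCDVF.v_mul ha0 (zpow_ne_zero _ hπ0), S.toCDVF.v_zpow hπ0, hπ, ← hm]
      omega
    have haπ0 : a * π ^ (-m) ≠ 0 := mul_ne_zero ha0 (zpow_ne_zero _ hπ0)
    obtain ⟨cw, hcw⟩ := S.residue_trivial (a * π ^ (-m)) (Or.inr hvaπ.ge)
    have hcwP : S.toCDVF.Pval 1 (a * π ^ (-m) - algebraMap k K cw) := hcw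
    have hcwO : S.toCDVF.Pval 0 (algebraMap k K cw) := by
      have h1 : algebraMap k K cw
          = a * π ^ (-m) + -(a * π ^ (-m) - algebraMap k K cw) := by ring
      rw [h1]
      exact CDVF.Pval.add (Or.inr hvaπ.ge) ((hcwP.mono (by omega)).neg)
    have hvbmi : S.toCDVF.v (b * π ^ (m - i)) = 0 := by
      rw [S.toCDVF.v_mul hb0 (zpow_ne_zero _ hπ0), S.toCDVF.v_zpow hπ0, hπ]
      omega
    have hbmi0 : b * π ^ (m - i) ≠ 0 := mul_ne_zero hb0 (zpow_ne_zero _ hπ0)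
    set u₁ : K := algebraMap k K cw * (b * π ^ (m - i)) with hu₁
    have hu₁O : S.toCDVF.Pval 0 u₁ :=
      (hcwO.mul (Or.inr hvbmi.ge)).mono (by omega)
    obtain ⟨c₁, hc₁⟩ := S.residue_trivial u₁ hu₁O
    have hc₁P : S.toCDVF.Pval 1 (u₁ - algebraMap k K c₁) := hc₁
    have hc₁O : S.toCDVF.Pval 0 (algebraMap k K c₁) := by
      have h1 : algebraMap k K c₁ = u₁ + -(u₁ - algebraMap k K c₁) := by ring
      rw [h1]
      exact CDVF.Pval.add hu₁O ((hc₁P.mono (by omega)).neg)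
    -- tensor decomposition
    have e1 : (algebraMap k K cw * π ^ m) ⊗ₜ[k] (b * π ^ (-i))
        = (π ^ m) ⊗ₜ[k] (algebraMap k K cw * (b * π ^ (-i))) := by
      rw [← Algebra.smul_def, ← Algebra.smul_def, TensorProduct.smul_tmul]
    have e2 : (algebraMap k K c₁ * π ^ m) ⊗ₜ[k] ((π : K) ^ (-m))
        = (π ^ m) ⊗ₜ[k] (algebraMap k K c₁ * π ^ (-m)) := by
      rw [← Algebra.smul_def, ← Algebra.smul_def, TensorProduct.smul_tmul]
    have e3 : u₁ * π ^ (-m) = algebraMap k K cw * (b * π ^ (-i)) := by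
      rw [hu₁]
      have h1 : algebraMap k K cw * (b * π ^ (m - i)) * π ^ (-m)
          = algebraMap k K cw * b * (π ^ (m - i) * π ^ (-m)) := by ring
      rw [h1, ← zpow_add₀ hπ0, show (m - i) + (-m) = -i by ring]
      ring
    have hdec : a ⊗ₜ[k] (b * π ^ (-i))
        = (algebraMap k K c₁ * π ^ m) ⊗ₜ[k] ((π : K) ^ (-m))
          + ((a - algebraMap k K cw * π ^ m) ⊗ₜ[k] (b * π ^ (-i))
             + (π ^ m) ⊗ₜ[k] ((u₁ - algebraMap k K c₁) * π ^ (-m))) := by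
      rw [e2, TensorProduct.sub_tmul, sub_mul, TensorProduct.tmul_sub, e3,
        ← e1]
      abel
    -- memberships of the pieces
    have hz₁ : (a - algebraMap k K cw * π ^ m) ⊗ₜ[k] (b * π ^ (-i))
        ∈ Xfil k K S.toCDVF 1 := by
      refine mem_Xfil_tmul _ (m + 1) ?_ ?_
      · have h1 : a - algebraMap k K cw * π ^ m
            = (a * π ^ (-m) - algebraMap k K cw) * π ^ m := by
          rw [sub_mul, mul_assoc, ← zpow_add₀ hπ0, neg_add_cancel, zpow_zero,
            mul_one]
        rw [h1]
        exact (hcwP.mul (s := m)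
          (Or.inr (by simp only [S.toCDVF.v_zpow hπ0, hπ]; omega))).mono (by omega)
      · exact Or.inr (by rw [hvbi]; omega)
    have hz₂ : ((π : K) ^ m) ⊗ₜ[k] ((u₁ - algebraMap k K c₁) * π ^ (-m))
        ∈ Xfil k K S.toCDVF 1 := by
      refine mem_Xfil_tmul _ m
        (Or.inr (by simp only [S.toCDVF.v_zpow hπ0, hπ]; omega)) ?_
      exact (hc₁P.mul (s := -m)
        (Or.inr (by simp only [S.toCDVF.v_zpow hπ0, hπ]; omega))).mono (by omega)
    have hz₁₂ : ((a - algebraMap k K cw * π ^ m) ⊗ₜ[k] (b * π ^ (-i))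
        + (π ^ m) ⊗ₜ[k] ((u₁ - algebraMap k K c₁) * π ^ (-m)))
        ∈ Xfil k K S.toCDVF 1 := AddSubgroup.add_mem _ hz₁ hz₂
    have hT1mem : (algebraMap k K c₁ * π ^ m) ⊗ₜ[k] ((π : K) ^ (-m))
        ∈ Xfil k K S.toCDVF 0 := by
      refine mem_Xfil_tmul _ m ?_ ?_
      · exact (hc₁O.mul (s := m)
          (Or.inr (by simp only [S.toCDVF.v_zpow hπ0, hπ]; omega))).mono (by omega)
      · exact Or.inr (by simp only [S.toCDVF.v_zpow hπ0, hπ]; omega)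
    have hB₁mem : (algebraMap k K c₁) ⊗ₜ[k] (1 : K) ∈ Xfil k K S.toCDVF 0 :=
      mem_Xfil_tmul _ 0 hc₁O (Or.inr (by rw [S.toCDVF.v_one]; omega))
    have hB₂mem : ((π : K) ^ m) ⊗ₜ[k] ((π : K) ^ (-m)) ∈ Xfil k K S.toCDVF 0 :=
      mem_Xfil_tmul _ m (Or.inr (by simp only [S.toCDVF.v_zpow hπ0, hπ]; omega))
        (Or.inr (by simp only [S.toCDVF.v_zpow hπ0, hπ]; omega))
    have hsplitT1 : (algebraMap k K c₁ * π ^ m) ⊗ₜ[k] ((π : K) ^ (-m))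
        = ((algebraMap k K c₁) ⊗ₜ[k] (1 : K)) * (((π : K) ^ m) ⊗ₜ[k] ((π : K) ^ (-m))) := by
      rw [Algebra.TensorProduct.tmul_mul_tmul, one_mul]
    have hc₁cond : c₁ = 0 ∨ 0 ≤ S.toCDVF.v (algebraMap k K c₁) := by
      rcases hc₁O with h | h
      · exact Or.inl (by simpa [map_eq_zero] using h)
      · exact Or.inr h
    -- ψ computation
    have hLHS : ψ (a ⊗ₜ[k] (b * π ^ (-i)))
        = algebraMap S.toCDVF.Residue (S.toCDVF.Rring (Module.finrank k K))
            (S.toCDVF.redK (algebraMap k K c₁))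
          * (S.toCDVF.mkX (Module.finrank k K)) ^ j₀ℕ := by
      rw [hdec, hψ.1 _ _ hT1mem (Xfil_mono _ (by omega) hz₁₂),
        hψ.1 _ _ (Xfil_mono _ (le_refl 1) hz₁ |> Xfil_mono _ (by omega) |> fun h => h)
          (Xfil_mono _ (by omega) hz₂)]
      rw [hψ.2.2.2.1 _ hz₁, hψ.2.2.2.1 _ hz₂, add_zero, add_zero]
      rw [hsplitT1, hψ.2.1 _ _ hB₁mem hB₂mem, hψ.2.2.2.2.2 c₁ hc₁cond,
        psi_pi_pow S.toCDVF (Module.finrank k K) π ψ hnpos hπ0 hπ hψ m, ← hj₀]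
    -- residue identification
    have hredc₁ : S.toCDVF.redK (algebraMap k K c₁)
        = S.toCDVF.redK (a * b * π ^ (-i)) := by
      have h1 : S.toCDVF.redK u₁ = S.toCDVF.redK (algebraMap k K c₁) := by
        have hsp : u₁ = algebraMap k K c₁ + (u₁ - algebraMap k K c₁) := by ring
        conv_lhs => rw [hsp]
        rw [S.toCDVF.redK_add hc₁O (hc₁P.mono (by omega)),
          S.toCDVF.redK_eq_zero hc₁P, add_zero]
      have h2 : S.toCDVF.redK (algebraMap k K cw)
          = S.toCDVF.redK (a * π ^ (-m)) := by
        have hsp : algebraMap k K cw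
            = a * π ^ (-m) + -(a * π ^ (-m) - algebraMap k K cw) := by ring
        conv_lhs => rw [hsp]
        rw [S.toCDVF.redK_add (Or.inr hvaπ.ge) ((hcwP.mono (by omega)).neg),
          S.toCDVF.redK_neg (hcwP.mono (by omega)), S.toCDVF.redK_eq_zero hcwP,
          neg_zero, add_zero]
      have h3 : (a * π ^ (-m)) * (b * π ^ (m - i)) = a * b * π ^ (-i) := by
        have h4 : (a * π ^ (-m)) * (b * π ^ (m - i))
            = a * b * (π ^ (-m) * π ^ (m - i)) := by ring
        rw [h4, ← zpow_add₀ hπ0, show (-m) + (m - i) = -i by ring]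
      rw [← h1, hu₁, S.toCDVF.redK_mul hcwO (Or.inr hvbmi.ge), h2,
        ← S.toCDVF.redK_mul (Or.inr hvaπ.ge) (Or.inr hvbmi.ge), h3]
    exact ⟨hmem1, hmem2, by rw [hLHS, hRHS, hredc₁]⟩

end KeyAux

end Statement10Aux

/-- For every `i ∈ ℤ` the two functions on `X_i` coincide:
`x ↦ r_X(x·(1 ⊗ π^{-i}) mod X_1)` and `x ↦ p_{d+i}(φ(x))`. Here `r_X` is
(any function representing) the canonical isomorphism `X_0/X_1 → k̄[X]/(X^n-1)`. -/
theorem statement10 {k K : Type} [Field k] [Field K] [Algebra k K]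
    [FiniteDimensional k K] [IsGalois k K] (S : TotallyRamifiedD k K)
    (π : K) (hπ0 : π ≠ 0) (hπ : S.toCDVF.v π = 1) :
    ∀ ψ : K ⊗[k] K → S.toCDVF.Rring (Module.finrank k K),
      IsRX k K S.toCDVF (Module.finrank k K) π ψ →
      ∀ i : ℤ, ∀ x : K ⊗[k] K, x ∈ Xfil k K S.toCDVF i →
        ψ (x * (((1 : K)) ⊗ₜ[k] (π ^ (-i)))) = pGA k S π (S.depth + i) (phiGA k K x) := by
  intro ψ hψ i x hx
  let P : K ⊗[k] K → Prop := fun y =>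
    (y * ((1:K) ⊗ₜ[k] (π ^ (-i))) ∈ Xfil k K S.toCDVF 0) ∧
    (∀ j ∈ Finset.range (Module.finrank k K),
      S.toCDVF.Pval 0 (applyGA k (phiGA k K y)
        (π ^ ((j:ℤ) - (S.depth + i))) / π ^ j)) ∧
    ψ (y * ((1:K) ⊗ₜ[k] (π ^ (-i)))) = pGA k S π (S.depth + i) (phiGA k K y)
  suffices h : P x from h.2.2
  refine AddSubgroup.closure_induction (p := fun y _ => P y) ?_ ?_ ?_ ?_ hx
  · rintro z ⟨a, b, j₀, ha, hb, rfl⟩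
    exact key_tmul S π hπ0 hπ ψ hψ i j₀ a b ha hb
  · exact key_zero S π i ψ hψ
  · rintro y z _ _ ⟨hy1, hy2, hy3⟩ ⟨hz1, hz2, hz3⟩
    refine ⟨?_, ?_, ?_⟩
    · rw [add_mul]
      exact AddSubgroup.add_mem _ hy1 hz1
    · intro j hj
      rw [map_add, applyGA_add, add_div]
      exact CDVF.Pval.add (hy2 j hj) (hz2 j hj)
    · rw [add_mul, hψ.1 _ _ hy1 hz1, hy3, hz3, map_add,
        pGA_add S π (S.depth + i) _ _ hy2 hz2]
  · rintro y _ ⟨hy1, hy2, hy3⟩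
    refine ⟨?_, ?_, ?_⟩
    · rw [neg_mul]
      exact AddSubgroup.neg_mem _ hy1
    · intro j hj
      rw [map_neg, applyGA_neg, neg_div]
      exact (hy2 j hj).neg
    · rw [neg_mul, psi_neg S.toCDVF (Module.finrank k K) π ψ hψ hy1, hy3,
        map_neg, pGA_neg S π (S.depth + i) _ hy2]
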